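/- arXiv:2504.09204 — 2 statements merged into one kernel-verified Lean document; each statement's English description precedes it below -/
import Mathlib

section
/- Let m ≥ 2 be an integer such that m is odd or 3m > 2n (i.e. m is not of the form 2k with 3k ≤ n). Then every positive root of D_{n+1} whose height is divisible by m can be written as a sum of roots of height exactly m. -/
/-!
A positive root of `D_{n+1}` is `ε_j - ε_i` or `ε_j + ε_i` with `i < j`. A difference root of
height `km` telescopes into `k` differences `ε_{a+m} - ε_a`. A sum root `ε_j + ε_i` of height a
multiple `≥ 2m` of `m` sheds a difference root of height `m`: it is `(ε_j + ε_{i-m}) + (ε_i - ε_{i-m})`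
if `m ≤ i`, and `(ε_{j-m} + ε_i) + (ε_j - ε_{j-m})` otherwise. The second split needs `j - m ≠ i`,
and this is exactly what the hypothesis on `m` guarantees: `j = i + m` with `m ∣ 2i`, `i < m`
forces `m = 2i` and then `j = 3m/2 > n`.
-/

noncomputable section

def eps (N : ℕ) (i : Fin N) : Fin N → ℝ := fun j => if j = i then 1 else 0

def Droots (n : ℕ) : Set (Fin (n + 1) → ℝ) :=
  {v | ∃ i j : Fin (n + 1), i < j ∧
        (v = eps (n + 1) j - eps (n + 1) i ∨ v = -(eps (n + 1) j - eps (n + 1) i) ∨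
         v = eps (n + 1) j + eps (n + 1) i ∨ v = -(eps (n + 1) j + eps (n + 1) i))}

def htD (n : ℕ) (v : Fin (n + 1) → ℝ) : ℝ := ∑ i : Fin (n + 1), v i * (i : ℝ)

section Height

variable {n : ℕ}

@[simp]
lemma htD_eps (k : Fin (n + 1)) : htD n (eps (n + 1) k) = k := by
  simp [htD, eps, ite_mul, Finset.sum_ite_eq']

@[simp]
lemma htD_add (u v : Fin (n + 1) → ℝ) : htD n (u + v) = htD n u + htD n v := by
  simp [htD, add_mul, Finset.sum_add_distrib]

@[simp]
lemma htD_neg (u : Fin (n + 1) → ℝ) : htD n (-u) = -htD n u := by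
  simp [htD]

@[simp]
lemma htD_sub (u v : Fin (n + 1) → ℝ) : htD n (u - v) = htD n u - htD n v := by
  simp [htD, sub_mul, Finset.sum_sub_distrib]

lemma exists_eq_sub_or_eq_add_of_mem_Droots {v : Fin (n + 1) → ℝ} (hv : v ∈ Droots n)
    (hpos : 0 < htD n v) :
    ∃ i j : Fin (n + 1), i < j ∧ (v = eps (n + 1) j - eps (n + 1) i ∨
      v = eps (n + 1) j + eps (n + 1) i) := by
  obtain ⟨i, j, hij, rfl | rfl | rfl | rfl⟩ := hv
  · exact ⟨i, j, hij, .inl rfl⟩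
  · have : (i : ℝ) < j := by exact_mod_cast hij
    simp only [htD_neg, htD_sub, htD_eps] at hpos
    linarith
  · exact ⟨i, j, hij, .inr rfl⟩
  · have : (i : ℝ) < j := by exact_mod_cast hij
    simp only [htD_neg, htD_add, htD_eps] at hpos
    linarith [(Nat.cast_nonneg i : (0 : ℝ) ≤ i)]

end Height

def rootsOfHeight (n : ℕ) (h : ℝ) : Set (Fin (n + 1) → ℝ) := {u ∈ Droots n | htD n u = h}

section Closure

variable {n m : ℕ}

lemma eps_sub_eps_mem_rootsOfHeight {i j : Fin (n + 1)} (hij : i < j) (h : (j : ℕ) = i + m) :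
    eps (n + 1) j - eps (n + 1) i ∈ rootsOfHeight n m :=
  ⟨⟨i, j, hij, .inl rfl⟩, by simp [h]⟩

lemma eps_add_eps_mem_rootsOfHeight {i j : Fin (n + 1)} (hij : i < j) (h : (i : ℕ) + j = m) :
    eps (n + 1) j + eps (n + 1) i ∈ rootsOfHeight n m :=
  ⟨⟨i, j, hij, .inr (.inr (.inl rfl))⟩, by simp [← h, add_comm]⟩

lemma eps_sub_eps_mem_closure (hm : 0 < m) (k : ℕ) :
    ∀ {i j : Fin (n + 1)}, i < j → (j : ℕ) = i + m * k →
      eps (n + 1) j - eps (n + 1) i ∈ AddSubmonoid.closure (rootsOfHeight n m) := by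
  induction k with
  | zero => intro i j hij h; exact absurd (Fin.ext (by simpa using h)) hij.ne'
  | succ k ih =>
    intro i j hij h
    rw [Nat.mul_succ] at h
    obtain rfl | hk := Nat.eq_zero_or_pos k
    · exact AddSubmonoid.subset_closure (eps_sub_eps_mem_rootsOfHeight hij (by simpa using h))
    have hmk : m ≤ m * k := Nat.le_mul_of_pos_right m hk
    let j' : Fin (n + 1) := ⟨j - m, by omega⟩
    have hsplit : eps (n + 1) j - eps (n + 1) i =
        (eps (n + 1) j - eps (n + 1) j') + (eps (n + 1) j' - eps (n + 1) i) := by abel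
    rw [hsplit]
    refine AddSubmonoid.add_mem _ (AddSubmonoid.subset_closure ?_) (ih ?_ ?_)
    · exact eps_sub_eps_mem_rootsOfHeight (Fin.lt_def.2 (show (j : ℕ) - m < (j : ℕ) by omega))
        (show (j : ℕ) = j - m + m by omega)
    · exact Fin.lt_def.2 (show (i : ℕ) < (j : ℕ) - m by omega)
    · show (j : ℕ) - m = i + m * k; omega

lemma ne_add_of_dvd_add {n m i j : ℕ} (hcase : Odd m ∨ 2 * n < 3 * m) (hj : j ≤ n) (hi : i < m)
    (hdvd : m ∣ i + j) (hne : i + j ≠ m) : j ≠ i + m := by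
  rintro rfl
  obtain ⟨c, hc⟩ : m ∣ 2 * i := Nat.dvd_add_self_right.1 (by rwa [← add_assoc, ← two_mul] at hdvd)
  have hc2 : c < 2 := by nlinarith
  interval_cases c
  · omega
  · rcases hcase with ⟨r, hr⟩ | hlt <;> omega

lemma eps_add_eps_mem_closure (hm : 0 < m) (hcase : Odd m ∨ 2 * n < 3 * m) (s : ℕ) :
    ∀ {i j : Fin (n + 1)}, i ≠ j → (i : ℕ) + j = s → m ∣ s →
      eps (n + 1) j + eps (n + 1) i ∈ AddSubmonoid.closure (rootsOfHeight n m) := by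
  induction s using Nat.strong_induction_on with
  | _ s ih =>
  intro i j hij hs hdvd
  wlog hlt : i < j generalizing i j
  · rw [add_comm (eps (n + 1) j)]
    exact this hij.symm (by omega) (lt_of_le_of_ne (not_lt.1 hlt) hij.symm)
  have hlt' : (i : ℕ) < j := hlt
  have hms : m ≤ s := Nat.le_of_dvd (by omega) hdvd
  obtain rfl | hms := hms.eq_or_lt
  · exact AddSubmonoid.subset_closure (eps_add_eps_mem_rootsOfHeight hlt hs)
  have hdvd' : m ∣ s - m := Nat.dvd_sub hdvd dvd_rfl
  have hms' : m ≤ s - m := Nat.le_of_dvd (by omega) hdvd'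
  by_cases hmi : m ≤ (i : ℕ)
  · let i' : Fin (n + 1) := ⟨i - m, by omega⟩
    have hsplit : eps (n + 1) j + eps (n + 1) i =
        (eps (n + 1) j + eps (n + 1) i') + (eps (n + 1) i - eps (n + 1) i') := by abel
    rw [hsplit]
    refine AddSubmonoid.add_mem _ (ih (s - m) (by omega) ?_ ?_ hdvd')
      (AddSubmonoid.subset_closure (eps_sub_eps_mem_rootsOfHeight ?_ ?_))
    · exact Fin.ne_of_val_ne (show (i : ℕ) - m ≠ j by omega)
    · show (i : ℕ) - m + j = s - m; omega
    · exact Fin.lt_def.2 (show (i : ℕ) - m < (i : ℕ) by omega)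
    · show (i : ℕ) = i - m + m; omega
  · have hne : (j : ℕ) ≠ i + m :=
      ne_add_of_dvd_add hcase (Nat.lt_succ_iff.1 j.isLt) (by omega) (hs ▸ hdvd) (by omega)
    let j' : Fin (n + 1) := ⟨j - m, by omega⟩
    have hsplit : eps (n + 1) j + eps (n + 1) i =
        (eps (n + 1) j' + eps (n + 1) i) + (eps (n + 1) j - eps (n + 1) j') := by abel
    rw [hsplit]
    refine AddSubmonoid.add_mem _ (ih (s - m) (by omega) ?_ ?_ hdvd')
      (AddSubmonoid.subset_closure (eps_sub_eps_mem_rootsOfHeight ?_ ?_))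
    · exact Fin.ne_of_val_ne (show (i : ℕ) ≠ j - m by omega)
    · show (i : ℕ) + (j - m) = s - m; omega
    · exact Fin.lt_def.2 (show (j : ℕ) - m < (j : ℕ) by omega)
    · show (j : ℕ) = j - m + m; omega

end Closure

lemma Nat.dvd_of_cast_eq_mul {a m : ℕ} {l : ℤ} (h : (a : ℝ) = m * l) : m ∣ a :=
  Int.natCast_dvd_natCast.mp ⟨l, by exact_mod_cast h⟩

theorem stmt7_general (n : ℕ) (m : ℕ) (hcase : Odd m ∨ 2 * n < 3 * m) :
    ∀ v ∈ Droots n, 0 < htD n v → (∃ l : ℤ, htD n v = (m : ℝ) * l) →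
      v ∈ AddSubmonoid.closure {u ∈ Droots n | htD n u = (m : ℝ)} := by
  rintro v hv hpos ⟨l, hl⟩
  have hm : 0 < m := Nat.pos_of_ne_zero <| by
    rintro rfl
    simp only [CharP.cast_eq_zero, zero_mul] at hl
    exact hpos.ne' hl
  obtain ⟨i, j, hij, rfl | rfl⟩ := exists_eq_sub_or_eq_add_of_mem_Droots hv hpos
  · have hij' : (i : ℕ) ≤ j := hij.le
    obtain ⟨k, hk⟩ : m ∣ (j : ℕ) - i :=
      Nat.dvd_of_cast_eq_mul (by simpa [Nat.cast_sub hij'] using hl)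
    exact eps_sub_eps_mem_closure hm k hij (by omega)
  · exact eps_add_eps_mem_closure hm hcase _ hij.ne rfl
      (Nat.dvd_of_cast_eq_mul (by simpa [add_comm] using hl))

/-- let `n ≥ 3` and `m ≥ 2` with `m` odd or `3m > 2n`. Then every
positive root of `D_{n+1}` whose height is divisible by `m` is a sum of roots of
height exactly `m`. -/
theorem stmt7 (n : ℕ) (hn : 3 ≤ n) (m : ℕ) (hm : 2 ≤ m)
    (hcase : Odd m ∨ 2 * n < 3 * m) :
    ∀ v ∈ Droots n, 0 < htD n v → (∃ l : ℤ, htD n v = (m : ℝ) * l) →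
      v ∈ AddSubmonoid.closure {u ∈ Droots n | htD n u = (m : ℝ)} :=
  stmt7_general n m hcase
end
end

section
/- Let k ≥ 1 be an integer with 3k ≤ n, and set m = 2k. Then R(m), the set of all roots of D_{n+1} whose height is divisible by m, is not of Levi type: for every element w of the Weyl group W and every subset S of the simple roots {α_0, α_1,…,α_n}, the image of R(m) under w is not equal to R ∩ span_ℝ(S). -/
noncomputable section

/-- The simple roots of `D_{n+1}`: `α_0 = ε_1 + ε_0` and `α_i = ε_i − ε_{i−1}`
for `1 ≤ i ≤ n`. -/
def DsimpleSet (n : ℕ) : Set (Fin (n + 1) → ℝ) :=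
  {v | (∃ i j : Fin (n + 1), (i : ℕ) = 0 ∧ (j : ℕ) = 1 ∧ v = eps (n + 1) j + eps (n + 1) i) ∨
       (∃ i j : Fin (n + 1), (j : ℕ) = (i : ℕ) + 1 ∧ v = eps (n + 1) j - eps (n + 1) i)}

/-- The Weyl group of `D_{n+1}`: the subgroup of `GL(ℝ^{n+1})` (realized as linear
automorphisms of `ℝ^{n+1}`) generated by the reflections
`s_γ : v ↦ v − (2⟨v,γ⟩/⟨γ,γ⟩)γ` for roots `γ`. -/
def DWeyl (n : ℕ) : Subgroup ((Fin (n + 1) → ℝ) ≃ₗ[ℝ] (Fin (n + 1) → ℝ)) :=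
  Subgroup.closure {σ | ∃ γ ∈ Droots n,
    ∀ v, σ v = v - ((2 * ∑ i, v i * γ i) / (∑ i, γ i * γ i)) • γ}

/-!
The root `ε_k − ε_0` has height `k`, so it is not in `R(2k)`, yet it lies in the span of `R(2k)`:
`2 (ε_k − ε_0) = (ε_{2k} − ε_0) − (ε_{2k} + ε_0) − (ε_{3k} − ε_k) + (ε_{3k} + ε_k)`.
A set of the form `R ∩ span S` contains every root in its span, and since `W` permutes `R`, so does
every preimage of such a set under `w ∈ W`; hence `w R(2k) = R ∩ span S` is impossible.
That `W` permutes `R` follows from describing `R` as the integer vectors of squared length `2`,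
which the reflections `s_γ`, being integral isometries, preserve.
-/

open Matrix Set
open scoped Pointwise

section IntegralVectors

variable {ι : Type*}

theorem exists_eq_single_add_single_of_dotProduct_self_eq_two [Fintype ι] [DecidableEq ι]
    {z : ι → ℤ} (h : z ⬝ᵥ z = 2) :
    ∃ i j, i ≠ j ∧ (z i = 1 ∨ z i = -1) ∧ (z j = 1 ∨ z j = -1) ∧
      z = Pi.single i (z i) + Pi.single j (z j) := by
  have hunit : ∀ i, z i ≠ 0 → z i = 1 ∨ z i = -1 := by
    intro i hi
    have hle : z i * z i ≤ 2 :=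
      h ▸ Finset.single_le_sum (fun j _ => mul_self_nonneg (z j)) (Finset.mem_univ i)
    have : -1 ≤ z i ∧ z i ≤ 1 := by constructor <;> nlinarith
    omega
  set s := Finset.univ.filter (z · ≠ 0)
  have hcard : s.card = 2 := by
    have hones : ∑ i ∈ s, z i * z i = ∑ i ∈ s, 1 := Finset.sum_congr rfl fun i hi => by
      rcases hunit i (Finset.mem_filter.1 hi).2 with h1 | h1 <;> simp [h1]
    have hsum := (Finset.sum_filter_of_ne fun i _ hi => left_ne_zero_of_mul hi).trans h
    rw [hones] at hsum
    exact_mod_cast (by simpa using hsum : (s.card : ℤ) = 2)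
  obtain ⟨i, j, hij, hs⟩ := Finset.card_eq_two.1 hcard
  have hsupp : ∀ l, z l ≠ 0 ↔ l = i ∨ l = j := fun l => by
    simpa [s] using congrArg (l ∈ ·) hs
  refine ⟨i, j, hij, hunit i ((hsupp i).2 (.inl rfl)), hunit j ((hsupp j).2 (.inr rfl)),
    funext fun l => ?_⟩
  by_cases hli : l = i
  · subst hli; simp [hij]
  by_cases hlj : l = j
  · subst hlj; simp [hli]
  simpa [hli, hlj] using mt (hsupp l).1

theorem dotProduct_self_sub_smul [Fintype ι] {R : Type*} [CommRing R] {g : ι → R}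
    (hg : g ⬝ᵥ g = 2) (z : ι → R) : (z - (g ⬝ᵥ z) • g) ⬝ᵥ (z - (g ⬝ᵥ z) • g) = z ⬝ᵥ z := by
  simp only [sub_dotProduct, dotProduct_sub, smul_dotProduct, dotProduct_smul, hg,
    dotProduct_comm z g, smul_eq_mul]
  ring

def intVec : (ι → ℤ) →+ (ι → ℝ) := (Int.castAddHom ℝ).compLeft ι

@[simp]
theorem intVec_apply (z : ι → ℤ) (i : ι) : intVec z i = z i := rfl

theorem intVec_dotProduct [Fintype ι] (z g : ι → ℤ) :
    intVec z ⬝ᵥ intVec g = ((z ⬝ᵥ g : ℤ) : ℝ) := by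
  simp [dotProduct]

theorem intVec_zsmul (c : ℤ) (z : ι → ℤ) : intVec (c • z) = (c : ℝ) • intVec z := by
  ext; simp

end IntegralVectors

theorem intVec_single {N : ℕ} (i : Fin N) (a : ℤ) :
    intVec (Pi.single i a) = (a : ℝ) • eps N i := by
  ext j; by_cases h : j = i <;> simp [eps, h]

theorem inter_span_subset_of_image_eq_inter_span {K V : Type*} [Semiring K] [AddCommMonoid V]
    [Module K V] {f : V →ₗ[K] V} (hf : Function.Injective f) {Φ X S : Set V}
    (hΦ : MapsTo f Φ Φ) (h : f '' X = Φ ∩ Submodule.span K S) :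
    Φ ∩ Submodule.span K X ⊆ X := by
  rintro v ⟨hvΦ, hvX⟩
  have hfvS : f v ∈ Submodule.span K S := by
    have hfvX : f v ∈ Submodule.span K (f '' X) := by
      rw [Submodule.span_image]
      exact Submodule.mem_map_of_mem hvX
    rw [h] at hfvX
    exact Submodule.span_le.2 inter_subset_right hfvX
  obtain ⟨u, hu, huv⟩ : f v ∈ f '' X := h ▸ ⟨hΦ hvΦ, hfvS⟩
  exact hf huv ▸ hu

section RootSystemD

variable {n : ℕ}

theorem smul_eps_add_smul_eps_mem_droots {i j : Fin (n + 1)} (hij : i ≠ j) {a b : ℝ}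
    (ha : a = 1 ∨ a = -1) (hb : b = 1 ∨ b = -1) :
    a • eps (n + 1) i + b • eps (n + 1) j ∈ Droots n := by
  wlog hlt : i < j generalizing i j a b
  · rw [add_comm (a • _)]
    exact this hij.symm hb ha (lt_of_le_of_ne (not_lt.1 hlt) hij.symm)
  refine ⟨i, j, hlt, ?_⟩
  rcases ha with rfl | rfl <;> rcases hb with rfl | rfl
  · exact .inr (.inr (.inl (by module)))
  · exact .inr (.inl (by module))
  · exact .inl (by module)
  · exact .inr (.inr (.inr (by module)))

theorem droots_eq_image_intVec : Droots n = intVec '' {z | z ⬝ᵥ z = 2} := by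
  have hunit : ∀ {a : ℤ}, a = 1 ∨ a = -1 → (a : ℝ) = 1 ∨ (a : ℝ) = -1 := by
    rintro a (rfl | rfl) <;> simp
  ext v
  constructor
  · have key : ∀ {i j : Fin (n + 1)}, i ≠ j → ∀ a b : ℤ, (a = 1 ∨ a = -1) → (b = 1 ∨ b = -1) →
        (a : ℝ) • eps (n + 1) i + (b : ℝ) • eps (n + 1) j ∈ intVec '' {z | z ⬝ᵥ z = 2} := by
      intro i j hij a b ha hb
      refine ⟨Pi.single i a + Pi.single j b, ?_, by simp [intVec_single]⟩
      rcases ha with rfl | rfl <;> rcases hb with rfl | rfl <;>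
        simp [hij, hij.symm]
    rintro ⟨i, j, hij, rfl | rfl | rfl | rfl⟩
    · convert key hij.ne' 1 (-1) (.inl rfl) (.inr rfl) using 1; push_cast; module
    · convert key hij.ne' (-1) 1 (.inr rfl) (.inl rfl) using 1; push_cast; module
    · convert key hij.ne' 1 1 (.inl rfl) (.inl rfl) using 1; push_cast; module
    · convert key hij.ne' (-1) (-1) (.inr rfl) (.inr rfl) using 1; push_cast; module
  · rintro ⟨z, hz, rfl⟩
    obtain ⟨i, j, hij, hi, hj, hz'⟩ := exists_eq_single_add_single_of_dotProduct_self_eq_two hz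
    rw [hz', map_add, intVec_single, intVec_single]
    exact smul_eps_add_smul_eps_mem_droots hij (hunit hi) (hunit hj)

theorem dotProduct_self_of_mem_droots {γ : Fin (n + 1) → ℝ} (hγ : γ ∈ Droots n) :
    γ ⬝ᵥ γ = 2 := by
  rw [droots_eq_image_intVec] at hγ
  obtain ⟨g, hg, rfl⟩ := hγ
  rw [intVec_dotProduct, (hg : g ⬝ᵥ g = 2)]
  norm_num

theorem mapsTo_reflection_droots {γ : Fin (n + 1) → ℝ} (hγ : γ ∈ Droots n)
    (h : dotProductBilin ℝ ℝ γ γ = 2) :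
    MapsTo (Module.reflection h) (Droots n) (Droots n) := by
  rw [droots_eq_image_intVec] at hγ ⊢
  obtain ⟨g, hg, rfl⟩ := hγ
  rintro _ ⟨z, hz, rfl⟩
  refine ⟨z - (g ⬝ᵥ z) • g, ?_, ?_⟩
  · exact (dotProduct_self_sub_smul hg z).trans hz
  · rw [Module.reflection_apply, map_sub, intVec_zsmul, dotProductBilin_apply_apply,
      intVec_dotProduct]

theorem mapsTo_droots_of_mem_dWeyl {w : (Fin (n + 1) → ℝ) ≃ₗ[ℝ] (Fin (n + 1) → ℝ)}
    (hw : w ∈ DWeyl n) : MapsTo w (Droots n) (Droots n) := by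
  have hstab : DWeyl n ≤ MulAction.stabilizer _ (Droots n) := by
    rw [DWeyl, Subgroup.closure_le]
    rintro σ ⟨γ, hγ, hσ⟩
    have h : dotProductBilin ℝ ℝ γ γ = 2 := dotProduct_self_of_mem_droots hγ
    have hσ_eq : σ = Module.reflection h := LinearEquiv.ext fun v => by
      rw [hσ, Module.reflection_apply, dotProductBilin_apply_apply, dotProduct_comm,
        show ∑ i, γ i * γ i = 2 from h, mul_div_cancel_left₀ _ two_ne_zero]
      rfl
    rw [SetLike.mem_coe, MulAction.mem_stabilizer_iff, ← Set.image_smul, hσ_eq]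
    exact (Module.bijOn_reflection_of_mapsTo h (mapsTo_reflection_droots hγ h)).image_eq
  intro v hv
  rw [← MulAction.mem_stabilizer_iff.1 (hstab hw)]
  exact Set.smul_mem_smul_set hv

theorem htD_eps_sub_eps (i j : Fin (n + 1)) :
    htD n (eps (n + 1) j - eps (n + 1) i) = (j : ℝ) - i := by
  simp [htD, eps, sub_mul, Finset.sum_sub_distrib, ite_mul]

theorem htD_eps_add_eps (i j : Fin (n + 1)) :
    htD n (eps (n + 1) j + eps (n + 1) i) = (j : ℝ) + i := by
  simp [htD, eps, add_mul, Finset.sum_add_distrib, ite_mul]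

def heightDvdRoots (n m : ℕ) : Set (Fin (n + 1) → ℝ) :=
  {v ∈ Droots n | ∃ l : ℤ, htD n v = (m : ℝ) * l}

theorem not_droots_inter_span_subset_heightDvdRoots {k : ℕ} (hk : 1 ≤ k) (h3k : 3 * k ≤ n) :
    ¬ Droots n ∩ Submodule.span ℝ (heightDvdRoots n (2 * k)) ⊆ heightDvdRoots n (2 * k) := by
  intro hclosed
  have hsub : ∀ {i j : Fin (n + 1)}, i < j → ∀ l : ℤ, (j : ℝ) - i = ((2 * k : ℕ) : ℝ) * l →
      eps (n + 1) j - eps (n + 1) i ∈ heightDvdRoots n (2 * k) := fun hij l hl =>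
    ⟨⟨_, _, hij, .inl rfl⟩, l, by rw [htD_eps_sub_eps, hl]⟩
  have hadd : ∀ {i j : Fin (n + 1)}, i < j → ∀ l : ℤ, (j : ℝ) + i = ((2 * k : ℕ) : ℝ) * l →
      eps (n + 1) j + eps (n + 1) i ∈ heightDvdRoots n (2 * k) := fun hij l hl =>
    ⟨⟨_, _, hij, .inr (.inr (.inl rfl))⟩, l, by rw [htD_eps_add_eps, hl]⟩
  let e₀ := eps (n + 1) ⟨0, by omega⟩
  let e₁ := eps (n + 1) ⟨k, by omega⟩
  let e₂ := eps (n + 1) ⟨2 * k, by omega⟩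
  let e₃ := eps (n + 1) ⟨3 * k, by omega⟩
  have hspan : e₁ - e₀ ∈ Submodule.span ℝ (heightDvdRoots n (2 * k)) := by
    have hcomb : e₁ - e₀ = (2⁻¹ : ℝ) • ((e₂ - e₀) - (e₂ + e₀) - (e₃ - e₁) + (e₃ + e₁)) := by
      module
    rw [hcomb]
    refine Submodule.smul_mem _ _ (add_mem (sub_mem (sub_mem ?_ ?_) ?_) ?_) <;>
      refine Submodule.subset_span ?_
    · exact hsub (Fin.mk_lt_mk.2 (by omega)) 1 (by simp)
    · exact hadd (Fin.mk_lt_mk.2 (by omega)) 1 (by simp)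
    · exact hsub (Fin.mk_lt_mk.2 (by omega)) 1 (by push_cast; ring)
    · exact hadd (Fin.mk_lt_mk.2 (by omega)) 2 (by push_cast; ring)
  have hroot : e₁ - e₀ ∈ Droots n := ⟨_, _, Fin.mk_lt_mk.2 (by omega), .inl rfl⟩
  obtain ⟨-, l, hl⟩ := hclosed ⟨hroot, hspan⟩
  rw [htD_eps_sub_eps] at hl
  have hkl : (k : ℤ) = 2 * k * l := by
    exact_mod_cast (by simpa using hl : (k : ℝ) = 2 * k * l)
  rcases le_or_gt l 0 with h | h <;> nlinarith

end RootSystemD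

theorem stmt10_general (n k : ℕ) (hk : 1 ≤ k) (h3k : 3 * k ≤ n) :
    ∀ w ∈ DWeyl n, ∀ S ⊆ DsimpleSet n,
      (w : (Fin (n + 1) → ℝ) → (Fin (n + 1) → ℝ)) ''
          {v ∈ Droots n | ∃ l : ℤ, htD n v = ((2 * k : ℕ) : ℝ) * l} ≠
        Droots n ∩ (Submodule.span ℝ S : Submodule ℝ (Fin (n + 1) → ℝ)) := fun w hw _ _ h =>
  not_droots_inter_span_subset_heightDvdRoots hk h3k
    (inter_span_subset_of_image_eq_inter_span (f := w.toLinearMap) w.injective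
      (mapsTo_droots_of_mem_dWeyl hw) h)

/-- let `k ≥ 1` with `3k ≤ n` and set `m = 2k`. Then `R(m)`, the set of
all roots of `D_{n+1}` whose height is divisible by `m`, is not of Levi type: no element
of the Weyl group sends `R(m)` onto `R ∩ span_ℝ(S)` for a subset `S` of the simple roots. -/
theorem stmt10 (n k : ℕ) (hn : 3 ≤ n) (hk : 1 ≤ k) (h3k : 3 * k ≤ n) :
    ∀ w ∈ DWeyl n, ∀ S ⊆ DsimpleSet n,
      (w : (Fin (n + 1) → ℝ) → (Fin (n + 1) → ℝ)) ''
          {v ∈ Droots n | ∃ l : ℤ, htD n v = ((2 * k : ℕ) : ℝ) * l} ≠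
        Droots n ∩ (Submodule.span ℝ S : Submodule ℝ (Fin (n + 1) → ℝ)) :=
  stmt10_general n k hk h3k
end
end
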